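/- arXiv:1502.06349 — 4 statements merged into one kernel-verified Lean document; each statement's English description precedes it below -/
import Mathlib

section
/- Let X and Y be real-valued random variables on a probability space with marginal distribution functions F(x) = P(X ≤ x) and G(y) = P(Y ≤ y) and joint distribution function H(x,y) = P(X ≤ x and Y ≤ y). If F and G are continuous, then there exists a unique copula C such that H(x,y) = C(F(x), G(y)) for all x, y ∈ ℝ. -/
open MeasureTheory

/-- A (bivariate) copula: a function `C : [0,1]² → [0,1]` (here extended as a function
`ℝ → ℝ → ℝ` whose relevant behaviour is on the unit square) satisfying the grounded,
uniform-margins and 2-increasing properties. -/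
def IsCopula (C : ℝ → ℝ → ℝ) : Prop :=
  (∀ u ∈ Set.Icc (0:ℝ) 1, ∀ v ∈ Set.Icc (0:ℝ) 1, C u v ∈ Set.Icc (0:ℝ) 1) ∧
  (∀ u ∈ Set.Icc (0:ℝ) 1, C u 0 = 0) ∧
  (∀ v ∈ Set.Icc (0:ℝ) 1, C 0 v = 0) ∧
  (∀ u ∈ Set.Icc (0:ℝ) 1, C u 1 = u) ∧
  (∀ v ∈ Set.Icc (0:ℝ) 1, C 1 v = v) ∧
  (∀ u₁ u₂ v₁ v₂ : ℝ, u₁ ∈ Set.Icc (0:ℝ) 1 → u₂ ∈ Set.Icc (0:ℝ) 1 →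
    v₁ ∈ Set.Icc (0:ℝ) 1 → v₂ ∈ Set.Icc (0:ℝ) 1 → u₁ ≤ u₂ → v₁ ≤ v₂ →
    0 ≤ C u₂ v₂ - C u₂ v₁ - C u₁ v₂ + C u₁ v₁)

/-!
If `F` and `G` are continuous, `U = F(X)` and `V = G(Y)` are uniformly distributed on `[0,1]`
(probability integral transform), so `C(u,v) = P(U ≤ u, V ≤ v)` is a copula. Continuity of `F`
also makes `{F(X) ≤ F(x)}` and `{X ≤ x}` differ by a null set, which gives `H = C(F, G)`.
Uniqueness: by the intermediate value theorem `F` and `G` take every value in `(0,1)`, and every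
copula has the same values on the boundary of the unit square.
-/

open Filter Set

namespace MeasureTheory

variable {Ω : Type*} [MeasurableSpace Ω] {μ : Measure Ω}

theorem measureReal_inter_sdiff_of_subset [IsFiniteMeasure μ] {r t₁ t₂ : Set Ω} (ht : t₁ ⊆ t₂)
    (ht₁ : MeasurableSet t₁) : μ.real (r ∩ (t₂ \ t₁)) = μ.real (r ∩ t₂) - μ.real (r ∩ t₁) := by
  have h := measureReal_inter_add_sdiff₀ (μ := μ) (s := r ∩ t₂) ht₁.nullMeasurableSet
  rw [inter_assoc, inter_eq_right.2 ht, inter_sdiff_assoc] at h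
  linarith

theorem measureReal_sdiff_inter_sdiff [IsFiniteMeasure μ] {s₁ s₂ t₁ t₂ : Set Ω}
    (hs : s₁ ⊆ s₂) (ht : t₁ ⊆ t₂) (hs₁ : MeasurableSet s₁) (ht₁ : MeasurableSet t₁) :
    μ.real ((s₂ \ s₁) ∩ (t₂ \ t₁)) =
      μ.real (s₂ ∩ t₂) - μ.real (s₂ ∩ t₁) - μ.real (s₁ ∩ t₂) + μ.real (s₁ ∩ t₁) := by
  rw [inter_comm, measureReal_inter_sdiff_of_subset hs hs₁, inter_comm _ s₂, inter_comm _ s₁,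
    measureReal_inter_sdiff_of_subset ht ht₁, measureReal_inter_sdiff_of_subset ht ht₁]
  ring

theorem measureReal_inter_of_measureReal_eq_one [IsProbabilityMeasure μ] {s t : Set Ω}
    (ht : MeasurableSet t) (h : μ.real t = 1) : μ.real (s ∩ t) = μ.real s := by
  have hc : μ tᶜ = 0 := by
    rw [← measureReal_eq_zero_iff, probReal_compl_eq_one_sub ht, h, sub_self]
  rw [measureReal_def, measure_inter_conull hc, measureReal_def]

end MeasureTheory

namespace ProbabilityTheory

theorem Ioo_subset_range_cdf {μ : Measure ℝ} (hμ : Continuous (cdf μ)) :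
    Ioo 0 1 ⊆ range (cdf μ) := fun _ hu =>
  mem_range_of_exists_le_of_exists_ge hμ
    (((tendsto_cdf_atBot μ).eventually_lt_const hu.1).exists.imp fun _ => le_of_lt)
    (((tendsto_cdf_atTop μ).eventually_const_lt hu.2).exists.imp fun _ => le_of_lt)

theorem measureReal_cdf_le {μ : Measure ℝ} [IsProbabilityMeasure μ] (hμ : Continuous (cdf μ))
    {u : ℝ} (hu : u ∈ Icc 0 1) : μ.real {x | cdf μ x ≤ u} = u := by
  rcases hu.2.eq_or_lt with rfl | hu1
  · simp [cdf_le_one]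
  set S := {x | cdf μ x ≤ u}
  obtain ⟨b, hb⟩ := ((tendsto_cdf_atTop μ).eventually_const_lt hu1).exists_forall_of_atTop
  have hS : BddAbove S := ⟨b, fun x hx => le_of_lt <| not_le.1 fun hbx => (hb x hbx).not_ge hx⟩
  rcases S.eq_empty_or_nonempty with hS₀ | hS₀
  · have : u ≤ 0 := ge_of_tendsto' (tendsto_cdf_atBot μ) fun x =>
      le_of_lt <| not_le.1 (eq_empty_iff_forall_notMem.1 hS₀ x)
    rw [hS₀, measureReal_empty]
    exact (le_antisymm this hu.1).symm
  -- `S` is a closed lower set; at its maximum `s`, `cdf μ s = u` as the cdf exceeds `u` right of `s`.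
  set s := sSup S
  have hs : s ∈ S := (isClosed_le hμ continuous_const).csSup_mem hS₀ hS
  have hSs : S = Iic s := Set.ext fun x =>
    ⟨fun hx => le_csSup hS hx, fun hx => (monotone_cdf μ hx).trans hs⟩
  have hus : u ≤ cdf μ s := ge_of_tendsto (hμ.continuousWithinAt (s := Ioi s) (x := s)).tendsto <|
    eventually_nhdsWithin_of_forall fun t ht => le_of_lt <| not_le.1 fun htu =>
      (not_le.2 ht) (le_csSup hS htu)
  rw [hSs, ← cdf_eq_real]
  exact le_antisymm hs hus

section RandomVariable

variable {Ω : Type*} [MeasurableSpace Ω] {μ : Measure Ω} [IsProbabilityMeasure μ] {X : Ω → ℝ}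

theorem cdf_map_eq_measureReal (hX : Measurable X) (x : ℝ) :
    cdf (μ.map X) x = μ.real {ω | X ω ≤ x} := by
  have := Measure.isProbabilityMeasure_map (μ := μ) hX.aemeasurable
  rw [cdf_eq_real, map_measureReal_apply hX measurableSet_Iic]
  rfl

theorem measureReal_cdf_map_comp_le (hX : Measurable X) (hcont : Continuous (cdf (μ.map X)))
    {u : ℝ} (hu : u ∈ Icc 0 1) : μ.real {ω | cdf (μ.map X) (X ω) ≤ u} = u := by
  have := Measure.isProbabilityMeasure_map (μ := μ) hX.aemeasurable
  exact (map_measureReal_apply hX (measurableSet_le hcont.measurable measurable_const)).symm.trans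
    (measureReal_cdf_le hcont hu)

theorem cdf_map_comp_le_ae_eq (hX : Measurable X) (hcont : Continuous (cdf (μ.map X))) (x : ℝ) :
    {ω | cdf (μ.map X) (X ω) ≤ cdf (μ.map X) x} =ᵐ[μ] {ω | X ω ≤ x} := by
  have hsub : {ω | X ω ≤ x} ⊆ {ω | cdf (μ.map X) (X ω) ≤ cdf (μ.map X) x} :=
    fun ω hω => monotone_cdf _ hω
  have heq : μ.real {ω | cdf (μ.map X) (X ω) ≤ cdf (μ.map X) x} = μ.real {ω | X ω ≤ x} :=
    (measureReal_cdf_map_comp_le hX hcont ⟨cdf_nonneg _ x, cdf_le_one _ x⟩).trans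
      (cdf_map_eq_measureReal hX x)
  exact (ae_eq_of_subset_of_measure_ge hsub
    ((ENNReal.toReal_eq_toReal_iff' (measure_ne_top _ _) (measure_ne_top _ _)).1 heq).le
    (hX measurableSet_Iic).nullMeasurableSet (measure_ne_top _ _)).symm

end RandomVariable

end ProbabilityTheory

theorem isCopula_of_uniform {Ω : Type*} [MeasurableSpace Ω] {μ : Measure Ω}
    [IsProbabilityMeasure μ] {U V : Ω → ℝ} (hU : Measurable U) (hV : Measurable V)
    (hUunif : ∀ u ∈ Icc (0 : ℝ) 1, μ.real {ω | U ω ≤ u} = u)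
    (hVunif : ∀ v ∈ Icc (0 : ℝ) 1, μ.real {ω | V ω ≤ v} = v) :
    IsCopula fun u v => μ.real ({ω | U ω ≤ u} ∩ {ω | V ω ≤ v}) := by
  have hUmeas : ∀ u, MeasurableSet {ω | U ω ≤ u} := fun _ => hU measurableSet_Iic
  have hVmeas : ∀ v, MeasurableSet {ω | V ω ≤ v} := fun _ => hV measurableSet_Iic
  have h0 : (0 : ℝ) ∈ Icc 0 1 := ⟨le_rfl, zero_le_one⟩
  have h1 : (1 : ℝ) ∈ Icc 0 1 := ⟨zero_le_one, le_rfl⟩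
  refine ⟨fun u _ v _ => ⟨measureReal_nonneg, measureReal_le_one⟩, fun u _ => ?_, fun v _ => ?_,
    fun u hu => ?_, fun v hv => ?_, fun u₁ u₂ v₁ v₂ _ _ _ _ hu hv => ?_⟩ <;> dsimp only
  · exact measureReal_mono_null inter_subset_right (hVunif 0 h0)
  · exact measureReal_mono_null inter_subset_left (hUunif 0 h0)
  · rw [measureReal_inter_of_measureReal_eq_one (hVmeas 1) (hVunif 1 h1), hUunif u hu]
  · rw [inter_comm, measureReal_inter_of_measureReal_eq_one (hUmeas 1) (hUunif 1 h1), hVunif v hv]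
  · rw [← measureReal_sdiff_inter_sdiff (ofPred_subset_ofPred.2 fun _ h => h.trans hu)
      (ofPred_subset_ofPred.2 fun _ h => h.trans hv) (hUmeas u₁) (hVmeas v₁)]
    exact measureReal_nonneg

theorem IsCopula.eq_of_eqOn_Ioo {C C' : ℝ → ℝ → ℝ} (hC : IsCopula C) (hC' : IsCopula C')
    (h : ∀ u ∈ Ioo (0 : ℝ) 1, ∀ v ∈ Ioo (0 : ℝ) 1, C u v = C' u v) :
    ∀ u ∈ Icc (0 : ℝ) 1, ∀ v ∈ Icc (0 : ℝ) 1, C u v = C' u v := by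
  obtain ⟨-, hC₁, hC₂, hC₃, hC₄, -⟩ := hC
  obtain ⟨-, hC'₁, hC'₂, hC'₃, hC'₄, -⟩ := hC'
  intro u hu v hv
  rcases hu.1.eq_or_lt with rfl | hu₀
  · rw [hC₂ v hv, hC'₂ v hv]
  rcases hu.2.eq_or_lt with rfl | hu₁
  · rw [hC₄ v hv, hC'₄ v hv]
  rcases hv.1.eq_or_lt with rfl | hv₀
  · rw [hC₁ u hu, hC'₁ u hu]
  rcases hv.2.eq_or_lt with rfl | hv₁
  · rw [hC₃ u hu, hC'₃ u hu]
  exact h u ⟨hu₀, hu₁⟩ v ⟨hv₀, hv₁⟩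

-- A plain `open ProbabilityTheory` would turn the binder name `ℙ` below into notation.
open ProbabilityTheory (cdf Ioo_subset_range_cdf cdf_map_eq_measureReal measureReal_cdf_map_comp_le
  cdf_map_comp_le_ae_eq)

/-- **Sklar's theorem** (existence and uniqueness of the copula for continuous marginals).
If `X` and `Y` are real random variables with continuous marginal distribution functions
`F`, `G` and joint distribution function `H`, then there is a copula `C`, unique on
`[0,1]²`, such that `H x y = C (F x) (G y)` for all `x, y`. -/
theorem sklar_theorem
    {Ω : Type*} [MeasurableSpace Ω] (ℙ : Measure Ω) [IsProbabilityMeasure ℙ]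
    (X Y : Ω → ℝ) (hX : Measurable X) (hY : Measurable Y)
    (F G : ℝ → ℝ) (H : ℝ → ℝ → ℝ)
    (hF : ∀ x, F x = (ℙ {ω | X ω ≤ x}).toReal)
    (hG : ∀ y, G y = (ℙ {ω | Y ω ≤ y}).toReal)
    (hH : ∀ x y, H x y = (ℙ {ω | X ω ≤ x ∧ Y ω ≤ y}).toReal)
    (hFcont : Continuous F) (hGcont : Continuous G) :
    ∃ C : ℝ → ℝ → ℝ, IsCopula C ∧ (∀ x y, H x y = C (F x) (G y)) ∧
      ∀ C' : ℝ → ℝ → ℝ, IsCopula C' → (∀ x y, H x y = C' (F x) (G y)) →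
        ∀ u ∈ Set.Icc (0:ℝ) 1, ∀ v ∈ Set.Icc (0:ℝ) 1, C u v = C' u v := by
  obtain rfl : F = cdf (ℙ.map X) := funext fun x => (hF x).trans (cdf_map_eq_measureReal hX x).symm
  obtain rfl : G = cdf (ℙ.map Y) := funext fun y => (hG y).trans (cdf_map_eq_measureReal hY y).symm
  set C := fun u v => ℙ.real ({ω | cdf (ℙ.map X) (X ω) ≤ u} ∩ {ω | cdf (ℙ.map Y) (Y ω) ≤ v})
  have hC : IsCopula C := isCopula_of_uniform (hFcont.measurable.comp hX)
    (hGcont.measurable.comp hY) (fun _ => measureReal_cdf_map_comp_le hX hFcont)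
    (fun _ => measureReal_cdf_map_comp_le hY hGcont)
  have hCH : ∀ x y, H x y = C (cdf (ℙ.map X) x) (cdf (ℙ.map Y) y) := fun x y =>
    (hH x y).trans (measureReal_congr
      ((cdf_map_comp_le_ae_eq hX hFcont x).inter (cdf_map_comp_le_ae_eq hY hGcont y))).symm
  refine ⟨C, hC, hCH, fun C' hC' hC'H => hC.eq_of_eqOn_Ioo hC' fun u hu v hv => ?_⟩
  obtain ⟨x, rfl⟩ := Ioo_subset_range_cdf hFcont hu
  obtain ⟨y, rfl⟩ := Ioo_subset_range_cdf hGcont hv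
  rw [← hCH, hC'H]
end

section
/- Let C be a copula and let F, G : ℝ → [0,1] be distribution functions (nondecreasing, right-continuous, with limit 0 at −∞ and limit 1 at +∞). Then there exists a probability measure ν on ℝ² such that ν((−∞,x] × (−∞,y]) = C(F(x), G(y)) for all x, y ∈ ℝ, and the two one-dimensional marginal measures of ν have distribution functions F and G respectively. -/
open MeasureTheory

/-- A one-dimensional distribution function: nondecreasing, right-continuous, with
limit `0` at `-∞` and limit `1` at `+∞`, taking values in `[0,1]`. -/
def IsDistributionFunction (F : ℝ → ℝ) : Prop :=
  Monotone F ∧ (∀ x, ContinuousWithinAt F (Set.Ici x) x) ∧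
    Filter.Tendsto F Filter.atBot (nhds 0) ∧ Filter.Tendsto F Filter.atTop (nhds 1) ∧
    ∀ x, F x ∈ Set.Icc (0:ℝ) 1

/-! Let `μ` be the law with distribution function `F`. For `v ∈ [0,1]`, `x ↦ C (F x) v` is again
a Stieltjes function, and by 2-increasingness its measure is dominated by `μ` and increases with
`v`; putting `v = G y` gives a monotone family of sub-measures `ρ y ≤ μ` with total masses
`G y`. The densities `dρ_q/dμ`, `q ∈ ℚ`, are then, at `μ`-almost every point, a distribution
function in `q`, i.e. a Markov kernel `κ`, and `ν = μ ⊗ κ` has `ν (s ×ˢ Iic y) = ρ y s`. -/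

open Filter Set ProbabilityTheory Topology
open scoped ENNReal

namespace MeasureTheory.Measure

variable {α : Type*} [MeasurableSpace α] {μ : Measure α} {ρ : ℝ → Measure α}

lemma measurable_toReal_rnDeriv : Measurable fun a (q : ℚ) ↦ ((ρ q).rnDeriv μ a).toReal :=
  measurable_pi_lambda _ fun _ ↦ (measurable_rnDeriv _ _).ennreal_toReal

/-- At `μ`-a.e. `a`, `q ↦ dρ_q/dμ (a)` is a distribution function on `ℚ`
(`ae_isRatStieltjesPoint_rnDeriv`); `stieltjesOfMeasurableRat` extends it right-continuously to `ℝ`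
and replaces it by a fixed distribution function on the exceptional null set. -/
noncomputable def cdfOfIicSnd (μ : Measure α) (ρ : ℝ → Measure α) : α → StieltjesFunction ℝ :=
  stieltjesOfMeasurableRat _ (measurable_toReal_rnDeriv (μ := μ) (ρ := ρ))

noncomputable def kernelOfIicSnd (μ : Measure α) (ρ : ℝ → Measure α) : Kernel α ℝ where
  toFun a := (cdfOfIicSnd μ ρ a).measure
  measurable' := measurable_measure_stieltjesOfMeasurableRat _

instance : IsMarkovKernel (kernelOfIicSnd μ ρ) :=
  ⟨fun a ↦ instIsProbabilityMeasure_stieltjesOfMeasurableRat _ a⟩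

lemma kernelOfIicSnd_Iic (a : α) (y : ℝ) :
    kernelOfIicSnd μ ρ a (Iic y) = ENNReal.ofReal (cdfOfIicSnd μ ρ a y) :=
  measure_stieltjesOfMeasurableRat_Iic _ a y

variable [IsFiniteMeasure μ]

lemma setLIntegral_rnDeriv_of_le {ν : Measure α} (h : ν ≤ μ) (s : Set α) :
    ∫⁻ a in s, ν.rnDeriv μ a ∂μ = ν s :=
  have := isFiniteMeasure_of_le μ h
  setLIntegral_rnDeriv (absolutelyContinuous_of_le h) s

lemma lintegral_rnDeriv_of_le {ν : Measure α} (h : ν ≤ μ) : ∫⁻ a, ν.rnDeriv μ a ∂μ = ν univ := by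
  rw [← setLIntegral_univ, setLIntegral_rnDeriv_of_le h]

lemma rnDeriv_le_rnDeriv_of_le {ν₁ ν₂ : Measure α} (h₁₂ : ν₁ ≤ ν₂) (h₂ : ν₂ ≤ μ) :
    ν₁.rnDeriv μ ≤ᵐ[μ] ν₂.rnDeriv μ :=
  ae_le_of_forall_setLIntegral_le_of_sigmaFinite (measurable_rnDeriv _ _) fun s _ _ ↦ by
    rw [setLIntegral_rnDeriv_of_le (h₁₂.trans h₂), setLIntegral_rnDeriv_of_le h₂]
    exact h₁₂ s

lemma ae_monotone_rnDeriv (hmono : Monotone ρ) (hle : ∀ y, ρ y ≤ μ) :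
    ∀ᵐ a ∂μ, Monotone fun q : ℚ ↦ (ρ q).rnDeriv μ a := by
  simp_rw [Monotone, ae_all_iff]
  exact fun q r hqr ↦ rnDeriv_le_rnDeriv_of_le (hmono (by exact_mod_cast hqr)) (hle r)

lemma ae_rnDeriv_le_one (hle : ∀ y, ρ y ≤ μ) : ∀ᵐ a ∂μ, ∀ q : ℚ, (ρ q).rnDeriv μ a ≤ 1 :=
  ae_all_iff.2 fun q ↦ rnDeriv_le_one_of_le (hle q)

lemma ae_tendsto_rnDeriv_atTop (hmono : Monotone ρ) (hle : ∀ y, ρ y ≤ μ)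
    (htop : Tendsto (fun y ↦ ρ y univ) atTop (𝓝 (μ univ))) :
    ∀ᵐ a ∂μ, Tendsto (fun q : ℚ ↦ (ρ q).rnDeriv μ a) atTop (𝓝 1) := by
  have hnat : ∀ᵐ a ∂μ, Tendsto (fun n : ℕ ↦ (ρ (n : ℚ)).rnDeriv μ a) atTop (𝓝 1) := by
    refine tendsto_of_lintegral_tendsto_of_monotone aemeasurable_const ?_ ?_ ?_ (by simp)
    · simp_rw [lintegral_rnDeriv_of_le (hle _), lintegral_const, one_mul]
      exact (htop.comp (tendsto_ratCast_atTop_iff.2 tendsto_id)).comp tendsto_natCast_atTop_atTop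
    · filter_upwards [ae_monotone_rnDeriv hmono hle] with a ha using ha.comp Nat.mono_cast
    · filter_upwards [ae_rnDeriv_le_one hle] with a ha n using ha n
  filter_upwards [hnat, ae_monotone_rnDeriv hmono hle] with a ha hmono_a
  have hsup := tendsto_atTop_iSup hmono_a
  rwa [tendsto_nhds_unique (hsup.comp tendsto_natCast_atTop_atTop) ha] at hsup

lemma ae_tendsto_rnDeriv_atBot (hmono : Monotone ρ) (hle : ∀ y, ρ y ≤ μ)
    (hbot : Tendsto (fun y ↦ ρ y univ) atBot (𝓝 0)) :
    ∀ᵐ a ∂μ, Tendsto (fun q : ℚ ↦ (ρ q).rnDeriv μ a) atBot (𝓝 0) := by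
  have hnat : ∀ᵐ a ∂μ, Tendsto (fun n : ℕ ↦ (ρ (-n : ℚ)).rnDeriv μ a) atTop (𝓝 0) := by
    refine tendsto_of_lintegral_tendsto_of_antitone (fun _ ↦ (measurable_rnDeriv _ _).aemeasurable)
      ?_ ?_ (by simp) ?_
    · simp_rw [lintegral_rnDeriv_of_le (hle _), lintegral_zero]
      exact (hbot.comp (tendsto_ratCast_atBot_iff.2 tendsto_id)).comp
        (tendsto_neg_atBot_iff.2 tendsto_natCast_atTop_atTop)
    · filter_upwards [ae_monotone_rnDeriv hmono hle] with a ha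
      exact ha.comp_antitone Nat.mono_cast.neg
    · rw [lintegral_rnDeriv_of_le (hle _)]
      exact ((hle _ univ).trans_lt (measure_lt_top μ univ)).ne
  filter_upwards [hnat, ae_monotone_rnDeriv hmono hle] with a ha hmono_a
  have hinf := tendsto_atTop_iInf (hmono_a.comp_antitone monotone_id.neg)
  rw [tendsto_nhds_unique (hinf.comp tendsto_natCast_atTop_atTop) ha] at hinf
  exact tendsto_comp_neg_atTop_iff.1 hinf

lemma rnDeriv_ae_eq_of_lintegral_le (hmono : Monotone ρ) (hle : ∀ y, ρ y ≤ μ) {y : ℝ}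
    (hright : Tendsto (fun y' ↦ ρ y' univ) (𝓝[>] y) (𝓝 (ρ y univ))) {h : α → ℝ≥0∞}
    (hh : AEMeasurable h μ) (hge : (ρ y).rnDeriv μ ≤ᵐ[μ] h)
    (hint : ∀ r : ℚ, y < r → ∫⁻ a, h a ∂μ ≤ ρ r univ) :
    (ρ y).rnDeriv μ =ᵐ[μ] h := by
  refine ae_eq_of_ae_le_of_lintegral_le hge ?_ hh ?_ <;> rw [lintegral_rnDeriv_of_le (hle y)]
  · exact ((hle y univ).trans_lt (measure_lt_top μ univ)).ne
  · refine ge_of_tendsto hright ?_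
    filter_upwards [self_mem_nhdsWithin] with y' hy'
    obtain ⟨r, hyr, hry'⟩ := exists_rat_btwn (mem_Ioi.1 hy')
    exact (hint r hyr).trans (hmono hry'.le univ)

lemma ae_iInf_rat_gt_rnDeriv (hmono : Monotone ρ) (hle : ∀ y, ρ y ≤ μ)
    (hright : ∀ y, Tendsto (fun y' ↦ ρ y' univ) (𝓝[>] y) (𝓝 (ρ y univ))) :
    ∀ᵐ a ∂μ, ∀ t : ℚ, ⨅ r : Ioi t, (ρ r).rnDeriv μ a = (ρ t).rnDeriv μ a := by
  refine ae_all_iff.2 fun t ↦ (rnDeriv_ae_eq_of_lintegral_le hmono hle (hright t)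
    (Measurable.iInf fun _ ↦ measurable_rnDeriv _ _).aemeasurable ?_ fun r htr ↦ ?_).symm
  · filter_upwards [ae_monotone_rnDeriv hmono hle] with a ha using le_iInf fun r ↦ ha r.2.le
  · rw [← lintegral_rnDeriv_of_le (hle r)]
    exact lintegral_mono fun a ↦ iInf_le_of_le ⟨r, by exact_mod_cast htr⟩ le_rfl

lemma ae_isRatStieltjesPoint_rnDeriv (hmono : Monotone ρ) (hle : ∀ y, ρ y ≤ μ)
    (hbot : Tendsto (fun y ↦ ρ y univ) atBot (𝓝 0))
    (htop : Tendsto (fun y ↦ ρ y univ) atTop (𝓝 (μ univ)))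
    (hright : ∀ y, Tendsto (fun y' ↦ ρ y' univ) (𝓝[>] y) (𝓝 (ρ y univ))) :
    ∀ᵐ a ∂μ, IsRatStieltjesPoint (fun a (q : ℚ) ↦ ((ρ q).rnDeriv μ a).toReal) a := by
  filter_upwards [ae_monotone_rnDeriv hmono hle, ae_rnDeriv_le_one hle,
    ae_tendsto_rnDeriv_atTop hmono hle htop, ae_tendsto_rnDeriv_atBot hmono hle hbot,
    ae_iInf_rat_gt_rnDeriv hmono hle hright] with a hmono_a hle_a htop_a hbot_a hinf_a
  have hfin (q : ℚ) : (ρ q).rnDeriv μ a ≠ ∞ := ((hle_a q).trans_lt ENNReal.one_lt_top).ne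
  refine ⟨fun q r hqr ↦ ENNReal.toReal_mono (hfin r) (hmono_a hqr), ?_, ?_, fun t ↦ ?_⟩
  · exact ENNReal.toReal_one ▸ (ENNReal.tendsto_toReal ENNReal.one_ne_top).comp htop_a
  · exact ENNReal.toReal_zero ▸ (ENNReal.tendsto_toReal ENNReal.zero_ne_top).comp hbot_a
  · rw [← ENNReal.toReal_iInf fun r : Ioi t ↦ hfin r, hinf_a t]

lemma ofReal_cdfOfIicSnd_rat_ae_eq (hmono : Monotone ρ) (hle : ∀ y, ρ y ≤ μ)
    (hbot : Tendsto (fun y ↦ ρ y univ) atBot (𝓝 0))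
    (htop : Tendsto (fun y ↦ ρ y univ) atTop (𝓝 (μ univ)))
    (hright : ∀ y, Tendsto (fun y' ↦ ρ y' univ) (𝓝[>] y) (𝓝 (ρ y univ))) (q : ℚ) :
    (fun a ↦ ENNReal.ofReal (cdfOfIicSnd μ ρ a q)) =ᵐ[μ] (ρ q).rnDeriv μ := by
  filter_upwards [ae_isRatStieltjesPoint_rnDeriv hmono hle hbot htop hright,
    ae_rnDeriv_le_one hle] with a ha hle_a
  rw [cdfOfIicSnd, stieltjesOfMeasurableRat_eq, toRatCDF_of_isRatStieltjesPoint ha,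
    ENNReal.ofReal_toReal ((hle_a q).trans_lt ENNReal.one_lt_top).ne]

lemma ofReal_cdfOfIicSnd_ae_eq (hmono : Monotone ρ) (hle : ∀ y, ρ y ≤ μ)
    (hbot : Tendsto (fun y ↦ ρ y univ) atBot (𝓝 0))
    (htop : Tendsto (fun y ↦ ρ y univ) atTop (𝓝 (μ univ)))
    (hright : ∀ y, Tendsto (fun y' ↦ ρ y' univ) (𝓝[>] y) (𝓝 (ρ y univ))) (y : ℝ) :
    (fun a ↦ ENNReal.ofReal (cdfOfIicSnd μ ρ a y)) =ᵐ[μ] (ρ y).rnDeriv μ := by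
  have hrat := ae_all_iff.2 (ofReal_cdfOfIicSnd_rat_ae_eq hmono hle hbot htop hright)
  refine (rnDeriv_ae_eq_of_lintegral_le (h := fun a ↦ ENNReal.ofReal (cdfOfIicSnd μ ρ a y))
    hmono hle (hright y) (measurable_stieltjesOfMeasurableRat _ y).ennreal_ofReal.aemeasurable
    ?_ fun r hyr ↦ ?_).symm
  · have hgt : ∀ᵐ a ∂μ, ∀ r : {r : ℚ // y < r}, (ρ y).rnDeriv μ a ≤ (ρ r).rnDeriv μ a :=
      ae_all_iff.2 fun r ↦ rnDeriv_le_rnDeriv_of_le (hmono r.2.le) (hle r)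
    have : Nonempty {r : ℚ // y < r} := nonempty_subtype.2 (exists_rat_gt y)
    filter_upwards [hrat, hgt] with a hrat_a hgt_a
    rw [← (cdfOfIicSnd μ ρ a).iInf_rat_gt_eq, ENNReal.ofReal_iInf]
    exact le_iInf fun r ↦ (hgt_a r).trans_eq (hrat_a r).symm
  · rw [← lintegral_rnDeriv_of_le (hle r), ← lintegral_congr_ae (hrat.mono fun a ha ↦ ha r)]
    exact lintegral_mono fun a ↦ ENNReal.ofReal_le_ofReal ((cdfOfIicSnd μ ρ a).mono hyr.le)

theorem exists_fst_eq_and_prod_Iic_eq (hmono : Monotone ρ) (hle : ∀ y, ρ y ≤ μ)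
    (hbot : Tendsto (fun y ↦ ρ y univ) atBot (𝓝 0))
    (htop : Tendsto (fun y ↦ ρ y univ) atTop (𝓝 (μ univ)))
    (hright : ∀ y, Tendsto (fun y' ↦ ρ y' univ) (𝓝[>] y) (𝓝 (ρ y univ))) :
    ∃ ν : Measure (α × ℝ), ν.fst = μ ∧
      ∀ y {s : Set α}, MeasurableSet s → ν (s ×ˢ Iic y) = ρ y s := by
  refine ⟨μ ⊗ₘ kernelOfIicSnd μ ρ, fst_compProd _ _, fun y s hs ↦ ?_⟩
  simp_rw [compProd_apply_prod hs measurableSet_Iic, kernelOfIicSnd_Iic]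
  rw [setLIntegral_congr_fun_ae hs ?_, setLIntegral_rnDeriv_of_le (hle y)]
  filter_upwards [ofReal_cdfOfIicSnd_ae_eq hmono hle hbot htop hright y] with a ha _ using ha

end MeasureTheory.Measure

lemma StieltjesFunction.measure_le_of_monotone_sub {f g : StieltjesFunction ℝ}
    (h : Monotone (⇑g - ⇑f)) : f.measure ≤ g.measure := by
  let d : StieltjesFunction ℝ :=
    ⟨⇑g - ⇑f, h, fun x ↦ (g.right_continuous x).sub (f.right_continuous x)⟩
  have hg : g = f + d := by ext x; simp [d]
  rw [hg, StieltjesFunction.measure_add]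
  exact Measure.le_add_right le_rfl

namespace IsDistributionFunction

variable {F : ℝ → ℝ}

noncomputable def stieltjesFunction (hF : IsDistributionFunction F) : StieltjesFunction ℝ :=
  ⟨F, hF.1, hF.2.1⟩

lemma measure_stieltjesFunction_Iic (hF : IsDistributionFunction F) (x : ℝ) :
    hF.stieltjesFunction.measure (Iic x) = ENNReal.ofReal (F x) := by
  simpa [stieltjesFunction] using hF.stieltjesFunction.measure_Iic hF.2.2.1 x

lemma isProbabilityMeasure_stieltjesFunction (hF : IsDistributionFunction F) :
    IsProbabilityMeasure hF.stieltjesFunction.measure :=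
  hF.stieltjesFunction.isProbabilityMeasure hF.2.2.1 hF.2.2.2.1

end IsDistributionFunction

namespace IsCopula

variable {C : ℝ → ℝ → ℝ} {u₁ u₂ v : ℝ}

lemma apply_le_apply_left (hC : IsCopula C) (hu₁ : u₁ ∈ Icc (0 : ℝ) 1) (hu₂ : u₂ ∈ Icc (0 : ℝ) 1)
    (hv : v ∈ Icc (0 : ℝ) 1) (h : u₁ ≤ u₂) : C u₁ v ≤ C u₂ v := by
  obtain ⟨-, hzero, -, -, -, hinc⟩ := hC
  have := hinc u₁ u₂ 0 v hu₁ hu₂ (left_mem_Icc.2 zero_le_one) hv h hv.1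
  linarith [hzero u₁ hu₁, hzero u₂ hu₂]

lemma apply_sub_apply_le_left (hC : IsCopula C) (hu₁ : u₁ ∈ Icc (0 : ℝ) 1)
    (hu₂ : u₂ ∈ Icc (0 : ℝ) 1) (hv : v ∈ Icc (0 : ℝ) 1) (h : u₁ ≤ u₂) :
    C u₂ v - C u₁ v ≤ u₂ - u₁ := by
  obtain ⟨-, -, -, hone, -, hinc⟩ := hC
  have := hinc u₁ u₂ v 1 hu₁ hu₂ hv (right_mem_Icc.2 zero_le_one) h hv.2
  linarith [hone u₁ hu₁, hone u₂ hu₂]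

lemma lipschitzOnWith_left (hC : IsCopula C) (hv : v ∈ Icc (0 : ℝ) 1) :
    LipschitzOnWith 1 (fun u ↦ C u v) (Icc 0 1) := by
  refine LipschitzOnWith.of_dist_le_mul fun u₁ hu₁ u₂ hu₂ ↦ ?_
  wlog h : u₁ ≤ u₂ generalizing u₁ u₂
  · rw [dist_comm, dist_comm u₁]
    exact this u₂ hu₂ u₁ hu₁ (le_of_not_ge h)
  rw [NNReal.coe_one, one_mul, dist_comm, dist_comm u₁, Real.dist_eq, Real.dist_eq,
    abs_of_nonneg (sub_nonneg.2 (hC.apply_le_apply_left hu₁ hu₂ hv h)),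
    abs_of_nonneg (sub_nonneg.2 h)]
  exact hC.apply_sub_apply_le_left hu₁ hu₂ hv h

variable {F : ℝ → ℝ}

noncomputable def stieltjesFunction (hC : IsCopula C) (hF : IsDistributionFunction F)
    (hv : v ∈ Icc (0 : ℝ) 1) : StieltjesFunction ℝ where
  toFun x := C (F x) v
  mono' _ _ hxy := hC.apply_le_apply_left (hF.2.2.2.2 _) (hF.2.2.2.2 _) hv (hF.1 hxy)
  right_continuous' x := ((hC.lipschitzOnWith_left hv).continuousOn _ (hF.2.2.2.2 x)).comp
    (hF.2.1 x) fun y _ ↦ hF.2.2.2.2 y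

lemma tendsto_stieltjesFunction {l : Filter ℝ} {u : ℝ} (hC : IsCopula C)
    (hF : IsDistributionFunction F) (hv : v ∈ Icc (0 : ℝ) 1) (hu : u ∈ Icc (0 : ℝ) 1)
    (hFu : Tendsto F l (𝓝 u)) : Tendsto (hC.stieltjesFunction hF hv) l (𝓝 (C u v)) :=
  ((hC.lipschitzOnWith_left hv).continuousOn u hu).tendsto.comp
    (tendsto_nhdsWithin_iff.2 ⟨hFu, .of_forall hF.2.2.2.2⟩)

lemma measure_stieltjesFunction_Iic (hC : IsCopula C) (hF : IsDistributionFunction F)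
    (hv : v ∈ Icc (0 : ℝ) 1) (x : ℝ) :
    (hC.stieltjesFunction hF hv).measure (Iic x) = ENNReal.ofReal (C (F x) v) := by
  have hbot := hC.tendsto_stieltjesFunction hF hv (left_mem_Icc.2 zero_le_one) hF.2.2.1
  rw [hC.2.2.1 v hv] at hbot
  simpa [stieltjesFunction] using (hC.stieltjesFunction hF hv).measure_Iic hbot x

lemma measure_stieltjesFunction_univ (hC : IsCopula C) (hF : IsDistributionFunction F)
    (hv : v ∈ Icc (0 : ℝ) 1) : (hC.stieltjesFunction hF hv).measure univ = ENNReal.ofReal v := by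
  have hbot := hC.tendsto_stieltjesFunction hF hv (left_mem_Icc.2 zero_le_one) hF.2.2.1
  have htop := hC.tendsto_stieltjesFunction hF hv (right_mem_Icc.2 zero_le_one) hF.2.2.2.1
  rw [hC.2.2.1 v hv] at hbot
  rw [hC.2.2.2.2.1 v hv] at htop
  simpa using (hC.stieltjesFunction hF hv).measure_univ hbot htop

lemma measure_stieltjesFunction_mono (hC : IsCopula C) (hF : IsDistributionFunction F)
    {v₁ v₂ : ℝ} (hv₁ : v₁ ∈ Icc (0 : ℝ) 1) (hv₂ : v₂ ∈ Icc (0 : ℝ) 1) (h : v₁ ≤ v₂) :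
    (hC.stieltjesFunction hF hv₁).measure ≤ (hC.stieltjesFunction hF hv₂).measure := by
  refine StieltjesFunction.measure_le_of_monotone_sub fun x y hxy ↦ ?_
  have := hC.2.2.2.2.2 _ _ _ _ (hF.2.2.2.2 x) (hF.2.2.2.2 y) hv₁ hv₂ (hF.1 hxy) h
  simp only [Pi.sub_apply, stieltjesFunction]
  linarith

lemma measure_stieltjesFunction_le (hC : IsCopula C) (hF : IsDistributionFunction F)
    (hv : v ∈ Icc (0 : ℝ) 1) :
    (hC.stieltjesFunction hF hv).measure ≤ hF.stieltjesFunction.measure := by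
  refine StieltjesFunction.measure_le_of_monotone_sub fun x y hxy ↦ ?_
  have := hC.apply_sub_apply_le_left (hF.2.2.2.2 x) (hF.2.2.2.2 y) hv (hF.1 hxy)
  simp only [Pi.sub_apply, stieltjesFunction, IsDistributionFunction.stieltjesFunction]
  linarith

end IsCopula

/-- **Converse part of Sklar's theorem.** If `C` is a copula and `F`, `G` are distribution
functions, then `H(x,y) = C(F x, G y)` is the joint distribution function of a probability
measure `ν` on `ℝ²` whose one-dimensional marginals have distribution functions `F` and `G`. -/
theorem sklar_converse (C : ℝ → ℝ → ℝ) (hC : IsCopula C) (F G : ℝ → ℝ)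
    (hF : IsDistributionFunction F) (hG : IsDistributionFunction G) :
    ∃ ν : Measure (ℝ × ℝ), IsProbabilityMeasure ν ∧
      (∀ x y : ℝ, (ν (Set.Iic x ×ˢ Set.Iic y)).toReal = C (F x) (G y)) ∧
      (∀ x : ℝ, ((ν.map Prod.fst) (Set.Iic x)).toReal = F x) ∧
      (∀ y : ℝ, ((ν.map Prod.snd) (Set.Iic y)).toReal = G y) := by
  let μ := hF.stieltjesFunction.measure
  have := hF.isProbabilityMeasure_stieltjesFunction
  let ρ y := (hC.stieltjesFunction hF (hG.2.2.2.2 y)).measure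
  have hρ_univ y : ρ y univ = ENNReal.ofReal (G y) := hC.measure_stieltjesFunction_univ hF _
  obtain ⟨ν, hfst, hprod⟩ := Measure.exists_fst_eq_and_prod_Iic_eq (μ := μ) (ρ := ρ)
    (fun _ _ h ↦ hC.measure_stieltjesFunction_mono hF _ _ (hG.1 h))
    (fun _ ↦ hC.measure_stieltjesFunction_le hF _)
    (by simpa [hρ_univ] using ENNReal.tendsto_ofReal hG.2.2.1)
    (by simpa [hρ_univ] using ENNReal.tendsto_ofReal hG.2.2.2.1)
    (fun y ↦ by
      simpa [hρ_univ] using ENNReal.tendsto_ofReal ((hG.2.1 y).mono Ioi_subset_Ici_self).tendsto)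
  refine ⟨ν, ⟨by rw [← Measure.fst_univ, hfst, measure_univ]⟩, fun x y ↦ ?_, fun x ↦ ?_, fun y ↦ ?_⟩
  · rw [hprod y measurableSet_Iic, hC.measure_stieltjesFunction_Iic,
      ENNReal.toReal_ofReal (hC.1 _ (hF.2.2.2.2 x) _ (hG.2.2.2.2 y)).1]
  · rw [← Measure.fst, hfst, hF.measure_stieltjesFunction_Iic,
      ENNReal.toReal_ofReal (hF.2.2.2.2 x).1]
  · rw [Measure.map_apply measurable_snd measurableSet_Iic, ← univ_prod, hprod y MeasurableSet.univ,
      hρ_univ, ENNReal.toReal_ofReal (hG.2.2.2.2 y).1]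
end

section
/- Let X and Y be real-valued random variables with continuous marginal distribution functions F(x) = P(X ≤ x), G(y) = P(Y ≤ y) and joint distribution function H(x,y) = P(X ≤ x and Y ≤ y). Define the generalized inverses F⁻¹(u) = inf{x : F(x) ≥ u} and G⁻¹(v) = inf{y : G(y) ≥ v} for u, v ∈ (0,1], and set C(u,v) = H(F⁻¹(u), G⁻¹(v)). Then for all x, y ∈ ℝ with F(x) > 0 and G(y) > 0, one has C(F(x), G(y)) = H(x,y). -/
/-!
A continuous distribution function `K` is constant on `[K⁻¹ (K t), t]`: the set
`{z | K t ≤ K z}` is closed by continuity and bounded below because `K → 0` at `-∞` while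
`K t > 0`, so it contains its infimum `t'`, and monotonicity forces `K t' = K t`. Hence
`{X ≤ F⁻¹ (F x)}` and `{X ≤ x}` differ by a null set, likewise for `Y`, and so the joint
events `{X ≤ F⁻¹ (F x), Y ≤ G⁻¹ (G y)}` and `{X ≤ x, Y ≤ y}` have the same probability.
-/

open MeasureTheory Filter Topology

lemma Monotone.sInf_setOf_le_le_self_and_apply_eq {K : ℝ → ℝ} (hmono : Monotone K)
    (hcont : Continuous K) {c t : ℝ} (hbot : Tendsto K atBot (𝓝 c)) (ht : c < K t) :
    sInf {z | K t ≤ K z} ≤ t ∧ K (sInf {z | K t ≤ K z}) = K t := by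
  obtain ⟨a, ha⟩ := eventually_atBot.mp (hbot.eventually (gt_mem_nhds ht))
  have hbdd : BddBelow {z | K t ≤ K z} :=
    ⟨a, fun z hz => le_of_not_ge fun hza => (ha z hza).not_ge hz⟩
  have hle : sInf {z | K t ≤ K z} ≤ t := csInf_le hbdd (le_refl (K t))
  have hmem : sInf {z | K t ≤ K z} ∈ {z | K t ≤ K z} :=
    (isClosed_le continuous_const hcont).csInf_mem ⟨t, le_refl (K t)⟩ hbdd
  exact ⟨hle, le_antisymm (hmono hle) hmem⟩

section

variable {Ω : Type*} [MeasurableSpace Ω] {μ : Measure Ω} {Z : Ω → ℝ}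

lemma cdf_map_eq_toReal [IsProbabilityMeasure μ] (hZ : Measurable Z) (t : ℝ) :
    ProbabilityTheory.cdf (μ.map Z) t = (μ {ω | Z ω ≤ t}).toReal := by
  have := Measure.isProbabilityMeasure_map (μ := μ) hZ.aemeasurable
  rw [ProbabilityTheory.cdf_eq_real, measureReal_def, Measure.map_apply hZ measurableSet_Iic]
  rfl

lemma setOf_le_ae_eq_of_toReal_eq [IsFiniteMeasure μ] (hZ : Measurable Z) {s t : ℝ}
    (hst : s ≤ t)
    (heq : (μ {ω | Z ω ≤ s}).toReal = (μ {ω | Z ω ≤ t}).toReal) :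
    {ω | Z ω ≤ s} =ᵐ[μ] {ω | Z ω ≤ t} :=
  ae_eq_of_subset_of_measure_ge (fun _ hω => le_trans hω hst)
    ((ENNReal.toReal_eq_toReal_iff' (measure_ne_top _ _) (measure_ne_top _ _)).mp heq).ge
    (hZ measurableSet_Iic).nullMeasurableSet (measure_ne_top _ _)

lemma setOf_le_sInf_ae_eq [IsProbabilityMeasure μ] (hZ : Measurable Z) {K : ℝ → ℝ}
    (hK : ∀ t, K t = (μ {ω | Z ω ≤ t}).toReal) (hcont : Continuous K) {t : ℝ} (ht : 0 < K t) :
    {ω | Z ω ≤ sInf {z | K t ≤ K z}} =ᵐ[μ] {ω | Z ω ≤ t} := by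
  have := Measure.isProbabilityMeasure_map (μ := μ) hZ.aemeasurable
  obtain rfl : K = ProbabilityTheory.cdf (μ.map Z) :=
    funext fun t => by rw [hK, cdf_map_eq_toReal hZ]
  obtain ⟨hle, heq⟩ := (ProbabilityTheory.cdf (μ.map Z)).mono.sInf_setOf_le_le_self_and_apply_eq
    hcont (ProbabilityTheory.tendsto_cdf_atBot _) ht
  exact setOf_le_ae_eq_of_toReal_eq hZ hle (by rwa [← hK, ← hK])

end

/-- For continuous marginals, the copula constructed from the joint distribution via the
generalized inverses `F⁻¹(u) = inf {x : F x ≥ u}` and `G⁻¹(v) = inf {y : G y ≥ v}`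
satisfies `C (F x) (G y) = H x y` wherever `F x > 0` and `G y > 0`. -/
theorem copula_from_generalized_inverse
    {Ω : Type*} [MeasurableSpace Ω] (ℙ : Measure Ω) [IsProbabilityMeasure ℙ]
    (X Y : Ω → ℝ) (hX : Measurable X) (hY : Measurable Y)
    (F G : ℝ → ℝ) (H : ℝ → ℝ → ℝ)
    (hF : ∀ x, F x = (ℙ {ω | X ω ≤ x}).toReal)
    (hG : ∀ y, G y = (ℙ {ω | Y ω ≤ y}).toReal)
    (hH : ∀ x y, H x y = (ℙ {ω | X ω ≤ x ∧ Y ω ≤ y}).toReal)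
    (hFcont : Continuous F) (hGcont : Continuous G)
    (Finv Ginv : ℝ → ℝ) (C : ℝ → ℝ → ℝ)
    (hFinv : ∀ u, Finv u = sInf {x : ℝ | u ≤ F x})
    (hGinv : ∀ v, Ginv v = sInf {y : ℝ | v ≤ G y})
    (hCdef : ∀ u v, C u v = H (Finv u) (Ginv v)) :
    ∀ x y : ℝ, 0 < F x → 0 < G y → C (F x) (G y) = H x y := by
  intro x y hx hy
  rw [hCdef, hFinv, hGinv, hH, hH]
  exact congrArg ENNReal.toReal <| measure_congr <|
    (setOf_le_sInf_ae_eq hX hF hFcont hx).inter (setOf_le_sInf_ae_eq hY hG hGcont hy)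
end

section
/- Let μ, σ : ℝ → ℝ be bounded functions and let f : ℝ → ℝ be four times continuously differentiable with compact support. Then there exists a constant K ≥ 0 such that for every h ∈ (0,1] and every x ∈ ℝ, |(A_h f)(x) − (μ(x) f'(x) + ½ σ(x)² f''(x))| ≤ K h². In particular sup_{x ∈ ℝ} |(A_h f)(x) − (A f)(x)| → 0 as h → 0⁺. -/
/-!
Expand `f (x ± h)` to third order; the Lagrange remainders are `O(h⁴)` uniformly in `x`, since
`f⁽⁴⁾` is continuous with compact support. In `A_h f` the coefficient `σ²/h²` multiplies the even
part `f (x + h) + f (x - h) - 2 f x = h² f'' + O(h⁴)` and `μ/h` the odd part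
`f (x + h) - f (x - h) = 2 h f' + h³ f'''/3 + O(h⁴)`, so `A_h f - A f = μ h² f'''/6 + O(h²)`.
The uniform bound `K h²` then squeezes the supremum of the error to `0`.
-/

open Filter

/-- The discretized diffusion generator
`(A_h f)(x) = ½(σ(x)²/h² + μ(x)/h)(f(x+h) − f(x)) + ½(σ(x)²/h² − μ(x)/h)(f(x−h) − f(x))`. -/
noncomputable def discreteGen (μ σ : ℝ → ℝ) (h : ℝ) (f : ℝ → ℝ) (x : ℝ) : ℝ :=
  (1 / 2) * (σ x ^ 2 / h ^ 2 + μ x / h) * (f (x + h) - f x)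
    + (1 / 2) * (σ x ^ 2 / h ^ 2 - μ x / h) * (f (x - h) - f x)

open Finset
open scoped Nat

theorem HasCompactSupport.iteratedDeriv {𝕜 F : Type*} [NontriviallyNormedField 𝕜]
    [NormedAddCommGroup F] [NormedSpace 𝕜 F] {f : 𝕜 → F} (hf : HasCompactSupport f) (n : ℕ) :
    HasCompactSupport (iteratedDeriv n f) := by
  induction n with
  | zero => simpa using hf
  | succ n ih => simpa only [iteratedDeriv_succ] using ih.deriv

theorem ContDiff.exists_norm_iteratedDeriv_le {𝕜 F : Type*} [NontriviallyNormedField 𝕜]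
    [NormedAddCommGroup F] [NormedSpace 𝕜 F] {f : 𝕜 → F} {n : ℕ} (hf : ContDiff 𝕜 n f)
    (hsupp : HasCompactSupport f) : ∃ C, ∀ x, ‖iteratedDeriv n f x‖ ≤ C :=
  (hsupp.iteratedDeriv n).exists_bound_of_continuous (hf.continuous_iteratedDeriv' n)

noncomputable def taylorRemainder (f : ℝ → ℝ) (n : ℕ) (x h : ℝ) : ℝ :=
  f (x + h) - ∑ k ∈ range (n + 1), h ^ k / k ! * iteratedDeriv k f x

theorem abs_taylorRemainder_le {f : ℝ → ℝ} {n : ℕ} (hf : ContDiff ℝ (n + 1) f) {M : ℝ}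
    (hM : ∀ y, |iteratedDeriv (n + 1) f y| ≤ M) (x h : ℝ) :
    |taylorRemainder f n x h| ≤ M * |h| ^ (n + 1) / (n + 1)! := by
  rcases eq_or_ne h 0 with rfl | hh
  · simp [taylorRemainder, sum_range_succ']
  obtain ⟨y, -, hy⟩ := taylor_mean_remainder_lagrange_iteratedDeriv
    (x₀ := x) (x := x + h) (by simpa using hh) hf.contDiffOn
  have hs : UniqueDiffOn ℝ (Set.uIcc x (x + h)) := uniqueDiffOn_uIcc (by simpa using hh)
  have htaylor : taylorWithinEval f n (Set.uIcc x (x + h)) x (x + h)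
      = ∑ k ∈ range (n + 1), h ^ k / k ! * iteratedDeriv k f x := by
    rw [taylor_within_apply]
    refine sum_congr rfl fun k hk => ?_
    rw [iteratedDerivWithin_eq_iteratedDeriv hs (hf.contDiffAt.of_le ?_) Set.left_mem_uIcc,
      smul_eq_mul, add_sub_cancel_left]
    · ring
    · exact_mod_cast (mem_range.1 hk).le
  rw [taylorRemainder, ← htaylor, hy, add_sub_cancel_left, abs_div, abs_mul, abs_pow,
    Nat.abs_cast]
  gcongr
  exact hM y

theorem eq_add_taylorRemainder_three (f : ℝ → ℝ) (x h : ℝ) :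
    f (x + h) = f x + h * deriv f x + h ^ 2 / 2 * iteratedDeriv 2 f x
      + h ^ 3 / 6 * iteratedDeriv 3 f x + taylorRemainder f 3 x h := by
  simp only [taylorRemainder, sum_range_succ, sum_range_zero, iteratedDeriv_zero,
    iteratedDeriv_one]
  norm_num [Nat.factorial]

theorem discreteGen_sub_generator_eq (μ σ f : ℝ → ℝ) (x : ℝ) {h : ℝ} (hh : h ≠ 0) :
    discreteGen μ σ h f x - (μ x * deriv f x + (1 / 2) * σ x ^ 2 * iteratedDeriv 2 f x)
      = μ x * h ^ 2 / 6 * iteratedDeriv 3 f x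
        + σ x ^ 2 * (taylorRemainder f 3 x h + taylorRemainder f 3 x (-h)) / (2 * h ^ 2)
        + μ x * (taylorRemainder f 3 x h - taylorRemainder f 3 x (-h)) / (2 * h) := by
  rw [discreteGen, eq_add_taylorRemainder_three f x h, sub_eq_add_neg x h,
    eq_add_taylorRemainder_three f x (-h)]
  field_simp
  ring

theorem abs_discreteGen_sub_generator_le {μ σ f : ℝ → ℝ} {Mμ Mσ M₃ M₄ : ℝ}
    (hμ : ∀ x, |μ x| ≤ Mμ) (hσ : ∀ x, |σ x| ≤ Mσ) (hf : ContDiff ℝ 4 f)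
    (hM₃ : ∀ x, |iteratedDeriv 3 f x| ≤ M₃) (hM₄ : ∀ x, |iteratedDeriv 4 f x| ≤ M₄)
    {h : ℝ} (hh : h ∈ Set.Ioc 0 1) (x : ℝ) :
    |discreteGen μ σ h f x - (μ x * deriv f x + (1 / 2) * σ x ^ 2 * iteratedDeriv 2 f x)|
      ≤ (Mμ * M₃ / 6 + (Mσ ^ 2 + Mμ) * M₄ / 24) * h ^ 2 := by
  obtain ⟨hh₀, hh₁⟩ := hh
  have hR : ∀ t, |t| = h → |taylorRemainder f 3 x t| ≤ M₄ * h ^ 4 / 24 := fun t ht => by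
    simpa [ht, Nat.factorial] using abs_taylorRemainder_le hf hM₄ x t
  have hRp := hR h (abs_of_pos hh₀)
  have hRm := hR (-h) (by rw [abs_neg, abs_of_pos hh₀])
  have hσ2 : σ x ^ 2 ≤ Mσ ^ 2 := by
    rw [← sq_abs]; exact pow_le_pow_left₀ (abs_nonneg _) (hσ x) 2
  have hM₄0 : 0 ≤ M₄ := (abs_nonneg _).trans (hM₄ 0)
  have hMμ0 : 0 ≤ Mμ := (abs_nonneg _).trans (hμ 0)
  rw [discreteGen_sub_generator_eq μ σ f x hh₀.ne']
  calc _ ≤ |μ x| * h ^ 2 / 6 * |iteratedDeriv 3 f x|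
        + σ x ^ 2 * (|taylorRemainder f 3 x h| + |taylorRemainder f 3 x (-h)|) / (2 * h ^ 2)
        + |μ x| * (|taylorRemainder f 3 x h| + |taylorRemainder f 3 x (-h)|) / (2 * h) := by
        refine (abs_add_three _ _ _).trans ?_
        simp only [abs_mul, abs_div, abs_pow, sq_abs, abs_two, abs_of_pos hh₀,
          abs_of_pos (by norm_num : (0 : ℝ) < 6)]
        gcongr
        exacts [abs_add_le _ _, abs_sub _ _]
    _ ≤ Mμ * h ^ 2 / 6 * M₃ + Mσ ^ 2 * (2 * (M₄ * h ^ 4 / 24)) / (2 * h ^ 2)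
        + Mμ * (2 * (M₄ * h ^ 4 / 24)) / (2 * h) := by
        gcongr <;> first | exact hμ x | exact hM₃ x | linarith
    _ = (Mμ * M₃ / 6 + Mσ ^ 2 * M₄ / 24) * h ^ 2 + Mμ * M₄ / 24 * h ^ 3 := by
        field_simp
    _ ≤ (Mμ * M₃ / 6 + (Mσ ^ 2 + Mμ) * M₄ / 24) * h ^ 2 := by
        have : h ^ 3 ≤ h ^ 2 := pow_le_pow_of_le_one hh₀.le hh₁ (by norm_num)
        nlinarith [mul_nonneg hMμ0 hM₄0]

theorem tendsto_iSup_abs_of_eventually_le {ι : Type*} [Nonempty ι] {F : ℝ → ι → ℝ}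
    {g : ℝ → ℝ} {l : Filter ℝ} (hg : Tendsto g l (nhds 0))
    (hF : ∀ᶠ h in l, ∀ i, |F h i| ≤ g h) :
    Tendsto (fun h => ⨆ i, |F h i|) l (nhds 0) :=
  squeeze_zero' (.of_forall fun _ => Real.iSup_nonneg fun _ => abs_nonneg _)
    (hF.mono fun _ hh => ciSup_le hh) hg

/-- For bounded coefficients `μ, σ` and a `C⁴` function `f` with compact support, the
discretized generator approximates the diffusion generator
`(A f)(x) = μ(x) f'(x) + ½ σ(x)² f''(x)` uniformly at rate `h²`; in particular the
uniform error tends to `0` as `h → 0⁺`. -/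
theorem discreteGen_uniform_convergence
    (μ σ : ℝ → ℝ) (Mμ Mσ : ℝ)
    (hμ : ∀ x, |μ x| ≤ Mμ) (hσ : ∀ x, |σ x| ≤ Mσ)
    (f : ℝ → ℝ) (hf : ContDiff ℝ 4 f) (hsupp : HasCompactSupport f) :
    (∃ K : ℝ, 0 ≤ K ∧ ∀ h ∈ Set.Ioc (0:ℝ) 1, ∀ x : ℝ,
        |discreteGen μ σ h f x - (μ x * deriv f x + (1 / 2) * σ x ^ 2 * iteratedDeriv 2 f x)|
          ≤ K * h ^ 2) ∧
      Tendsto (fun h : ℝ => ⨆ x : ℝ,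
          |discreteGen μ σ h f x - (μ x * deriv f x + (1 / 2) * σ x ^ 2 * iteratedDeriv 2 f x)|)
        (nhdsWithin 0 (Set.Ioi 0)) (nhds 0) := by
  obtain ⟨M₃, hM₃⟩ := (hf.of_le (by norm_num) : ContDiff ℝ 3 f).exists_norm_iteratedDeriv_le hsupp
  obtain ⟨M₄, hM₄⟩ := hf.exists_norm_iteratedDeriv_le hsupp
  set K := Mμ * M₃ / 6 + (Mσ ^ 2 + Mμ) * M₄ / 24
  have hK : 0 ≤ K := by
    have := (abs_nonneg _).trans (hμ 0)
    have := (norm_nonneg _).trans (hM₃ 0)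
    have := (norm_nonneg _).trans (hM₄ 0)
    positivity
  have hbound : ∀ h ∈ Set.Ioc (0:ℝ) 1, ∀ x : ℝ,
      |discreteGen μ σ h f x - (μ x * deriv f x + (1 / 2) * σ x ^ 2 * iteratedDeriv 2 f x)|
        ≤ K * h ^ 2 := fun h hh =>
    abs_discreteGen_sub_generator_le hμ hσ hf hM₃ hM₄ hh
  refine ⟨⟨K, hK, hbound⟩, tendsto_iSup_abs_of_eventually_le (g := fun h => K * h ^ 2) ?_ ?_⟩
  · exact (((continuous_pow 2).const_mul K).tendsto' 0 0 (by simp)).mono_left nhdsWithin_le_nhds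
  · filter_upwards [Ioc_mem_nhdsGT (show (0 : ℝ) < 1 by norm_num)] using hbound
end
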